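/- For a path-connected space X, the n-th homotopic distance of the n coordinate projections pr_1,...,pr_n : X^n → X equals the n-th topological complexity: D(pr_1,...,pr_n) = TC_n(X). -/

import Mathlib

open Set

/-- The `n`-th homotopic distance of maps `f 0, …, f (n-1) : X → Y`:
the least `k` admitting an open cover `U 0, …, U k` of `X` on each element of
which all the maps are pairwise homotopic; `∞` if no such cover exists. -/
noncomputable def homDist {X Y : Type*} [TopologicalSpace X] [TopologicalSpace Y]
    {n : ℕ} (f : Fin n → C(X, Y)) : ℕ∞ :=
  sInf ((fun k : ℕ => (k : ℕ∞)) '' {k | ∃ U : Fin (k + 1) → Set X,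
    (∀ j, IsOpen (U j)) ∧ (⋃ j, U j) = Set.univ ∧
    ∀ j i i', ((f i).restrict (U j)).Homotopic ((f i').restrict (U j))})

/-- The sectional category of a map `q : E → B`: the least `k` such that `B`
has an open cover of `k+1` open sets each admitting a continuous local section. -/
noncomputable def secat {E B : Type*} [TopologicalSpace E] [TopologicalSpace B]
    (q : C(E, B)) : ℕ∞ :=
  sInf ((fun k : ℕ => (k : ℕ∞)) '' {k | ∃ U : Fin (k + 1) → Set B,
    (∀ j, IsOpen (U j)) ∧ (⋃ j, U j) = Set.univ ∧
    ∀ j, ∃ s : C(U j, E), ∀ x : U j, q (s x) = (x : B)})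

/-- Projection of `X^n` onto the `i`-th factor. -/
def prMap (X : Type*) [TopologicalSpace X] (n : ℕ) (i : Fin n) :
    C((Fin n → X), X) :=
  ⟨fun x => x i, continuous_apply i⟩

/-- The space `X^{J_n}` of `n`-legged paths in `X`: `n` paths with a common
initial point (the wedge of `n` intervals glued at `0`, mapped into `X`). -/
abbrev NLegged (X : Type*) [TopologicalSpace X] (n : ℕ) : Type _ :=
  {γ : Fin n → C(unitInterval, X) // ∀ i j : Fin n, γ i 0 = γ j 0}

/-- The fibration `e_n : X^{J_n} → X^n` evaluating at the `n` free endpoints. -/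
def enMap (X : Type*) [TopologicalSpace X] (n : ℕ) :
    C(NLegged X n, Fin n → X) :=
  ⟨fun γ i => (γ.1 i) 1, by
    apply continuous_pi; intro i
    exact (continuous_eval_const (F := C(unitInterval, X)) 1).comp
      ((continuous_apply i).comp continuous_subtype_val)⟩

open ContinuousMap

/-!
A section of `e_n` over `U ⊆ Xⁿ` is the same thing as `n` homotopies, parametrised by `x ∈ U`,
from a common base map `U → X` to the projections `pr_i`: the `i`-th leg of the section at `x`
is the track of `x` under the `i`-th homotopy. Pairwise homotopy of the `pr_i` on `U` is
equivalent to the existence of such a common base (take `pr_0` itself), so the covers defining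
`D(pr_1, …, pr_n)` and `TC_n(X)` are the same covers.
-/

section

variable {X Y : Type*} [TopologicalSpace X] [TopologicalSpace Y] {n : ℕ}

namespace NLegged

def ofHomotopies {b : C(Y, X)} {g : Fin n → C(Y, X)}
    (H : ∀ i, ContinuousMap.Homotopy b (g i)) :
    C(Y, NLegged X n) where
  toFun y := ⟨fun i => (H i).toContinuousMap.comp prodSwap |>.curry y,
    fun i j => by simp⟩
  continuous_toFun :=
    (continuous_pi fun i => ((H i).toContinuousMap.comp prodSwap).curry.continuous).subtype_mk _

theorem enMap_ofHomotopies {b : C(Y, X)} {g : Fin n → C(Y, X)}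
    (H : ∀ i, ContinuousMap.Homotopy b (g i)) (y : Y) :
    enMap X n (ofHomotopies H y) = fun i => g i y := by
  funext i
  exact (H i).apply_one y

theorem continuous_leg_comp (s : C(Y, NLegged X n)) (j : Fin n) :
    Continuous fun y => (s y).1 j :=
  (continuous_apply j).comp (continuous_subtype_val.comp s.continuous)

def legHomotopy (s : C(Y, NLegged X n)) (i j : Fin n) :
    ContinuousMap.Homotopy ⟨fun y => (s y).1 i 0, (continuous_leg_comp s i).eval_const 0⟩
      ((prMap X n j).comp ((enMap X n).comp s)) where
  toContinuousMap := ⟨fun p => (s p.2).1 j p.1,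
    continuous_eval.comp (((continuous_leg_comp s j).comp continuous_snd).prodMk continuous_fst)⟩
  map_zero_left y := (s y).2 j i
  map_one_left _ := rfl

end NLegged

theorem homotopic_prMap_comp_enMap_comp (s : C(Y, NLegged X n)) (i i' : Fin n) :
    ((prMap X n i).comp ((enMap X n).comp s)).Homotopic
      ((prMap X n i').comp ((enMap X n).comp s)) :=
  ⟨(NLegged.legHomotopy s i i).symm.trans (NLegged.legHomotopy s i i')⟩

theorem exists_lift_enMap_of_homotopic {f : C(Y, Fin n → X)}
    (h : ∀ i i', ((prMap X n i).comp f).Homotopic ((prMap X n i').comp f)) :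
    ∃ s : C(Y, NLegged X n), ∀ y, enMap X n (s y) = f y := by
  cases n with
  | zero => exact ⟨const Y ⟨finZeroElim, finZeroElim⟩, fun _ => funext finZeroElim⟩
  | succ m => exact ⟨_, NLegged.enMap_ofHomotopies fun i => (h 0 i).some⟩

theorem homotopic_prMap_comp_iff_exists_lift (f : C(Y, Fin n → X)) :
    (∀ i i', ((prMap X n i).comp f).Homotopic ((prMap X n i').comp f)) ↔
      ∃ s : C(Y, NLegged X n), ∀ y, enMap X n (s y) = f y := by
  refine ⟨exists_lift_enMap_of_homotopic, fun ⟨s, hs⟩ => ?_⟩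
  obtain rfl : (enMap X n).comp s = f := ContinuousMap.ext hs
  exact homotopic_prMap_comp_enMap_comp s

end

theorem homDist_projections_eq_TC_general {X : Type*} [TopologicalSpace X] (n : ℕ) :
    homDist (prMap X n) = secat (enMap X n) := by
  refine congrArg sInf (congrArg _ (Set.ext fun k => exists_congr fun U =>
    and_congr_right' (and_congr_right' (forall_congr' fun j => ?_))))
  exact homotopic_prMap_comp_iff_exists_lift (restrict (U j) (ContinuousMap.id _))

/-- For a path-connected space `X`, the homotopic distance of the `n` coordinate
projections equals the `n`-th topological complexity: `D(pr₁, …, prₙ) = TCₙ(X)`. -/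
theorem homDist_projections_eq_TC {X : Type*} [TopologicalSpace X]
    [PathConnectedSpace X] (n : ℕ) :
    homDist (prMap X n) = secat (enMap X n) :=
  homDist_projections_eq_TC_general n
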